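/- The word 1213121 over the alphabet {1,2,3} is rich and square-free, and it is a longest rich square-free word over a 3-letter alphabet, i.e., every rich square-free word over a 3-letter alphabet has length at most 7. -/

import Mathlib

/-!
Adding a letter to a word creates at most one new palindromic factor: a new one is a
palindromic suffix not occurring earlier, and of two palindromic suffixes the shorter is also
a prefix of the longer, hence occurs earlier. So prefixes of rich words are rich, and richness
and square-freeness survive an injective renaming of the letters. A rich square-free word of
length at least 8 on three letters would therefore yield one of length exactly 8 over `Fin 3`;
the square-free words of that length are enumerated letter by letter, and none is rich.
-/

/-- A word is a palindrome if it equals its reversal. -/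
def Palindromic {α : Type*} (w : List α) : Prop := w.reverse = w

/-- A finite word is rich if it has exactly |w|+1 distinct palindromic factors
(including the empty word). -/
def Rich {α : Type*} (w : List α) : Prop :=
  {p : List α | p <:+: w ∧ Palindromic p}.ncard = w.length + 1

/-- A word is square-free if it has no factor of the form `u ++ u` with `u` nonempty. -/
def SqFree {α : Type*} (w : List α) : Prop :=
  ∀ u : List α, u ≠ [] → ¬ (u ++ u) <:+: w

open Function

section Words

variable {α β : Type*}

def infixes (w : List α) : List (List α) := w.tails.flatMap List.inits

theorem mem_infixes {p w : List α} : p ∈ infixes w ↔ p <:+: w := by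
  simp only [infixes, List.mem_flatMap, List.mem_tails, List.mem_inits,
    List.infix_iff_prefix_suffix]
  tauto

instance [DecidableEq α] : DecidablePred (Palindromic (α := α)) :=
  fun w => inferInstanceAs (Decidable (w.reverse = w))

theorem Palindromic.of_map {g : α → β} (hg : Injective g) {p : List α}
    (h : Palindromic (p.map g)) : Palindromic p :=
  List.map_injective_iff.2 hg (by rwa [List.map_reverse])

theorem infix_of_prefix_of_suffix_concat {p q w : List α} {a : α} (hpq : p <+: q)
    (hlt : p.length < q.length) (hq : q <:+ w ++ [a]) : p <:+: w := by
  rcases List.suffix_concat_iff.1 hq with rfl | ⟨t, rfl, ht⟩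
  · simp at hlt
  rcases List.prefix_concat_iff.1 hpq with rfl | hpt
  · simp at hlt
  · exact hpt.isInfix.trans ht.isInfix

theorem Palindromic.eq_of_suffix_concat_of_not_infix {p q w : List α} {a : α}
    (hp : Palindromic p) (hq : Palindromic q) (hpa : p <:+ w ++ [a]) (hqa : q <:+ w ++ [a])
    (hpw : ¬ p <:+: w) (hqw : ¬ q <:+: w) : p = q := by
  wlog hle : p.length ≤ q.length generalizing p q
  · exact (this hq hp hqa hpa hqw hpw (by omega)).symm
  have hpq : p <+: q := by
    have := (List.suffix_of_suffix_length_le hpa hqa hle).reverse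
    rwa [show p.reverse = p from hp, show q.reverse = q from hq] at this
  refine hpq.eq_of_length (le_antisymm hle (not_lt.1 fun hlt => hpw ?_))
  exact infix_of_prefix_of_suffix_concat hpq hlt hqa

theorem SqFree.of_infix {u w : List α} (h : SqFree w) (hu : u <:+: w) : SqFree u :=
  fun v hv hvu => h v hv (hvu.trans hu)

theorem SqFree.of_map {g : α → β} {w : List α} (h : SqFree (w.map g)) : SqFree w :=
  fun u hu huw => h (u.map g) (by simpa using hu) (by simpa using huw.map g)

theorem sqFree_iff_forall_infixes {w : List α} :
    SqFree w ↔ ∀ u ∈ infixes w, u ≠ [] → ¬ u ++ u <:+: w :=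
  ⟨fun h u _ => h u, fun h u hu huw =>
    h u (mem_infixes.2 ((List.prefix_append u u).isInfix.trans huw)) hu huw⟩

variable [DecidableEq α]

def palFactors (w : List α) : Finset (List α) := (infixes w).toFinset.filter Palindromic

theorem mem_palFactors {p w : List α} : p ∈ palFactors w ↔ p <:+: w ∧ Palindromic p := by
  simp [palFactors, mem_infixes]

theorem rich_iff_card_palFactors {w : List α} : Rich w ↔ (palFactors w).card = w.length + 1 := by
  have h : {p | p <:+: w ∧ Palindromic p} = ↑(palFactors w) := by
    ext p; simp [mem_palFactors]
  rw [Rich, h, Set.ncard_coe_finset]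

instance (w : List α) : Decidable (Rich w) := decidable_of_iff' _ rich_iff_card_palFactors

theorem card_palFactors_concat_le (w : List α) (a : α) :
    (palFactors (w ++ [a])).card ≤ (palFactors w).card + 1 := by
  have hsub : palFactors w ⊆ palFactors (w ++ [a]) := fun p hp => by
    rw [mem_palFactors] at hp ⊢
    exact ⟨hp.1.trans (List.prefix_append w [a]).isInfix, hp.2⟩
  have hnew : (palFactors (w ++ [a]) \ palFactors w).card ≤ 1 := by
    refine Finset.card_le_one.2 fun p hp q hq => ?_
    simp only [Finset.mem_sdiff, mem_palFactors, not_and] at hp hq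
    have suffix_of_new {r : List α} (hr : r <:+: w ++ [a]) (hrw : ¬ r <:+: w) : r <:+ w ++ [a] :=
      (List.infix_concat_iff.1 hr).resolve_right hrw
    exact hp.1.2.eq_of_suffix_concat_of_not_infix hq.1.2
      (suffix_of_new hp.1.1 (hp.2 · hp.1.2)) (suffix_of_new hq.1.1 (hq.2 · hq.1.2))
      (hp.2 · hp.1.2) (hq.2 · hq.1.2)
  rw [← Finset.card_sdiff_add_card_eq_card hsub]
  omega

theorem card_palFactors_append_le (u t : List α) :
    (palFactors (u ++ t)).card ≤ (palFactors u).card + t.length := by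
  induction t using List.reverseRecOn with
  | nil => simp
  | append_singleton t a ih =>
    have := card_palFactors_concat_le (u ++ t) a
    rw [← List.append_assoc, List.length_append, List.length_singleton]
    omega

theorem card_palFactors_le (w : List α) : (palFactors w).card ≤ w.length + 1 := by
  have hnil : (palFactors ([] : List α)).card = 1 := by
    rw [Finset.card_eq_one]; refine ⟨[], Finset.ext fun p => ?_⟩
    simp only [mem_palFactors, List.infix_nil, Finset.mem_singleton]
    exact ⟨And.left, fun h => ⟨h, h ▸ rfl⟩⟩
  simpa [hnil, add_comm] using card_palFactors_append_le [] w

theorem Rich.of_isPrefix {u w : List α} (h : Rich w) (hu : u <+: w) : Rich u := by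
  obtain ⟨t, rfl⟩ := hu
  rw [rich_iff_card_palFactors] at h ⊢
  have := card_palFactors_append_le u t
  have := card_palFactors_le u
  rw [List.length_append] at h
  omega

theorem card_palFactors_map_le [DecidableEq β] {g : α → β} (hg : Injective g) (w : List α) :
    (palFactors (w.map g)).card ≤ (palFactors w).card := by
  refine (Finset.card_le_card fun p hp => ?_).trans (Finset.card_image_le (f := List.map g))
  obtain ⟨hinf, hpal⟩ := mem_palFactors.1 hp
  obtain ⟨q, hq, rfl⟩ := List.infix_map_iff.1 hinf
  exact Finset.mem_image.2 ⟨q, mem_palFactors.2 ⟨hq, hpal.of_map hg⟩, rfl⟩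

theorem Rich.of_map [DecidableEq β] {g : α → β} (hg : Injective g) {w : List α}
    (h : Rich (w.map g)) : Rich w := by
  rw [rich_iff_card_palFactors, List.length_map] at *
  have := card_palFactors_map_le hg w
  have := card_palFactors_le w
  omega

instance (w : List α) : Decidable (SqFree w) := decidable_of_iff' _ sqFree_iff_forall_infixes

def sqFreeWords (A : List α) : ℕ → List (List α)
  | 0 => [[]]
  | n + 1 => ((sqFreeWords A n).flatMap fun w => A.map (w ++ [·])).filter (SqFree ·)

theorem mem_sqFreeWords {A w : List α} (hA : ∀ x ∈ w, x ∈ A) (hw : SqFree w) :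
    w ∈ sqFreeWords A w.length := by
  induction w using List.reverseRecOn with
  | nil => simp [sqFreeWords]
  | append_singleton w a ih =>
    have hw' : w ∈ sqFreeWords A w.length :=
      ih (fun x hx => hA x (List.mem_append_left _ hx))
        (hw.of_infix (List.prefix_append w [a]).isInfix)
    simp only [List.length_append, List.length_singleton, sqFreeWords, List.mem_filter,
      List.mem_flatMap, List.mem_map, decide_eq_true_eq]
    exact ⟨⟨w, hw', a, hA a (by simp), rfl⟩, hw⟩

set_option maxRecDepth 10000 in
theorem not_rich_of_mem_sqFreeWords_eight :
    ∀ w ∈ sqFreeWords (List.finRange 3) 8, ¬ Rich w := by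
  decide

end Words

theorem exists_injective_map_eq_of_card_toFinset_le {α : Type*} [DecidableEq α] [Infinite α]
    {n : ℕ} (v : List α) (h : v.toFinset.card ≤ n) :
    ∃ g : Fin n → α, Injective g ∧ ∃ w : List (Fin n), w.map g = v := by
  obtain ⟨t, hvt, rfl⟩ := Infinite.exists_superset_card_eq v.toFinset n h
  refine ⟨(↑) ∘ t.equivFin.symm, Subtype.val_injective.comp t.equivFin.symm.injective, ?_⟩
  rw [← Set.mem_range, Set.range_list_map]
  intro x hx
  exact ⟨t.equivFin ⟨x, hvt (List.mem_toFinset.2 hx)⟩, by simp⟩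

theorem longest_rich_squarefree_three_letters :
    Rich ([1, 2, 1, 3, 1, 2, 1] : List ℕ) ∧ SqFree ([1, 2, 1, 3, 1, 2, 1] : List ℕ) ∧
    ∀ v : List ℕ, Rich v → SqFree v → v.toFinset.card ≤ 3 → v.length ≤ 7 := by
  refine ⟨by decide, by decide, fun v hR hS hcard => ?_⟩
  by_contra! hlen
  obtain ⟨g, hg, w, rfl⟩ := exists_injective_map_eq_of_card_toFinset_le v hcard
  have hprefix : w.take 8 <+: w := List.take_prefix 8 w
  have hlen8 : (w.take 8).length = 8 := by
    rw [List.length_map] at hlen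
    rw [List.length_take]
    omega
  have hmem : w.take 8 ∈ sqFreeWords (List.finRange 3) 8 := by
    have := mem_sqFreeWords (fun x _ => List.mem_finRange x) (hS.of_map.of_infix hprefix.isInfix)
    rwa [hlen8] at this
  exact not_rich_of_mem_sqFreeWords_eight _ hmem ((hR.of_map hg).of_isPrefix hprefix)
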